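/- arXiv:1008.0390 — 2 statements merged into one kernel-verified Lean document; each statement's English description precedes it below -/
import Mathlib

section
/- Fix an integer d ≥ 3 and let the entries of C : [n]^d → ℝ be independent rate-1 exponential random variables. Then with high probability the minimum planar assignment cost satisfies Z_P(n,d) ≥ n^{2−d}/2; that is, P( Z_P(n,d) ≥ n^{2−d}/2 ) → 1 as n → ∞. -/
/-!
For a fixed planar assignment the cost is a sum of `n` independent `Exp(1)` variables, so
Chernoff's bound gives `P(cost ≤ ε) ≤ (e ε / n) ^ n`. The cost does not depend on the
permutation in the first coordinate, so a union bound runs over only `(n !) ^ (d - 1)`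
assignments, and with `ε = n ^ (2 - d) / 2` and `n ! ≤ 2 n ^ n / 2 ^ n` the failure probability
is at most `4 (e / 8) ^ n`.
-/

open MeasureTheory ProbabilityTheory Filter Finset
open scoped Nat Topology

lemma two_mul_pow_self_le_add_one_pow {n : ℕ} (hn : n ≠ 0) : 2 * n ^ n ≤ (n + 1) ^ n := by
  have hn' : (0 : ℝ) < n := by positivity
  have bernoulli : (2 : ℝ) ≤ (1 + (n : ℝ)⁻¹) ^ n := by
    have := one_add_mul_le_pow (a := (n : ℝ)⁻¹) (by linarith [inv_pos.2 hn']) n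
    rwa [mul_inv_cancel₀ hn'.ne', one_add_one_eq_two] at this
  have hsplit : ((n : ℝ) + 1) ^ n = (n : ℝ) ^ n * (1 + (n : ℝ)⁻¹) ^ n := by
    rw [← mul_pow, mul_add, mul_one, mul_inv_cancel₀ hn'.ne']
  have : (2 : ℝ) * n ^ n ≤ (n + 1) ^ n := by
    rw [hsplit]; nlinarith [pow_pos hn' n]
  exact_mod_cast this

lemma factorial_mul_two_pow_le {n : ℕ} (hn : n ≠ 0) : n ! * 2 ^ n ≤ 2 * n ^ n := by
  induction n, Nat.one_le_iff_ne_zero.2 hn using Nat.le_induction with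
  | base => norm_num
  | succ n hn ih =>
    calc (n + 1)! * 2 ^ (n + 1) = 2 * (n + 1) * (n ! * 2 ^ n) := by
          rw [Nat.factorial_succ]; ring
      _ ≤ 2 * (n + 1) * (2 * n ^ n) := Nat.mul_le_mul_left _ (ih (by omega))
      _ ≤ 2 * (n + 1) * (n + 1) ^ n := by gcongr; exact two_mul_pow_self_le_add_one_pow (by omega)
      _ = 2 * (n + 1) ^ (n + 1) := by ring

lemma factorial_pow_mul_le_geometric {n d : ℕ} (hn : n ≠ 0) (hd : 3 ≤ d) :
    (n ! : ℝ) ^ (d - 1) * (Real.exp 1 * ((n : ℝ) ^ ((2 : ℤ) - d) / 2) / n) ^ n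
      ≤ 4 * (Real.exp 1 / 8) ^ n := by
  have hn' : (0 : ℝ) < n := by positivity
  set q : ℝ := n ! / (n : ℝ) ^ n with hq
  have hq0 : 0 ≤ q := by positivity
  have hq1 : q ≤ 1 :=
    div_le_one_of_le₀ (by exact_mod_cast Nat.factorial_le_pow n) (by positivity)
  have hq2 : q ≤ 2 / 2 ^ n := by
    rw [hq, div_le_div_iff₀ (by positivity) (by positivity)]
    exact_mod_cast (factorial_mul_two_pow_le hn).trans_eq (by ring)
  have hzpow : (n : ℝ) ^ ((2 : ℤ) - d) = n / (n : ℝ) ^ (d - 1) := by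
    rw [show (2 : ℤ) - d = 1 - ((d - 1 : ℕ) : ℤ) by omega, zpow_sub₀ hn'.ne', zpow_one,
      zpow_natCast]
  calc (n ! : ℝ) ^ (d - 1) * (Real.exp 1 * ((n : ℝ) ^ ((2 : ℤ) - d) / 2) / n) ^ n
      = q ^ (d - 1) * (Real.exp 1 / 2) ^ n := by
        have hbase : Real.exp 1 * (n / (n : ℝ) ^ (d - 1) / 2) / n
            = Real.exp 1 / 2 / (n : ℝ) ^ (d - 1) := by
          field_simp
        rw [hzpow, hbase, div_pow, ← pow_mul, mul_comm (d - 1) n, pow_mul, hq, div_pow]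
        ring
    _ ≤ q ^ 2 * (Real.exp 1 / 2) ^ n :=
        mul_le_mul_of_nonneg_right (pow_le_pow_of_le_one hq0 hq1 (by omega)) (by positivity)
    _ ≤ (2 / 2 ^ n) ^ 2 * (Real.exp 1 / 2) ^ n := by gcongr
    _ = 4 * (Real.exp 1 / 8) ^ n := by
        rw [div_pow, div_pow, div_pow, show (8 : ℝ) = 2 * 2 ^ 2 by norm_num, mul_pow, ← pow_mul,
          ← pow_mul]
        field_simp
        ring

lemma mgf_id_expMeasure {r t : ℝ} (hr : 0 < r) (ht : t < r) :
    mgf id (expMeasure r) t = r / (r - t) := by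
  have hdens : ∀ x, (exponentialPDF r x).toReal * Real.exp (t * x)
      = Set.indicator (Set.Ici 0) (fun x ↦ r * Real.exp ((t - r) * x)) x := by
    intro x
    rw [exponentialPDF, ENNReal.toReal_ofReal (exponentialPDFReal_nonneg hr x)]
    by_cases hx : 0 ≤ x
    · rw [Set.indicator_of_mem (Set.mem_Ici.2 hx), exponentialPDFReal, gammaPDFReal, if_pos hx]
      simp only [Real.rpow_one, Real.Gamma_one, div_one, sub_self, Real.rpow_zero, mul_one]
      rw [mul_assoc, ← Real.exp_add]
      ring_nf
    · rw [Set.indicator_of_notMem (by simpa using hx), exponentialPDFReal, gammaPDFReal, if_neg hx,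
        zero_mul]
  calc mgf id (expMeasure r) t
      = ∫ x, (exponentialPDF r x).toReal • Real.exp (t * x) :=
        integral_withDensity_eq_integral_toReal_smul
          (measurable_exponentialPDFReal r).ennreal_ofReal
          (ae_of_all _ fun _ ↦ ENNReal.ofReal_lt_top) _
    _ = r * ∫ x in Set.Ioi 0, Real.exp ((t - r) * x) := by
        simp_rw [smul_eq_mul, hdens]
        rw [integral_indicator measurableSet_Ici, integral_Ici_eq_integral_Ioi, integral_const_mul]
    _ = r / (r - t) := by
        rw [integral_exp_mul_Ioi (by linarith) 0, mul_zero, Real.exp_zero, ← neg_sub r t,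
          neg_div_neg_eq, mul_one_div]

section ExponentialSums

variable {Ω : Type*} [MeasurableSpace Ω] {μ : Measure Ω}

lemma aemeasurable_of_map_eq_expMeasure {X : Ω → ℝ} {r : ℝ} (hr : 0 < r)
    (hX : μ.map X = expMeasure r) : AEMeasurable X μ := by
  have := isProbabilityMeasure_expMeasure hr
  exact AEMeasurable.of_map_ne_zero (hX ▸ IsProbabilityMeasure.ne_zero _)

lemma mgf_of_map_eq_expMeasure {X : Ω → ℝ} {r t : ℝ} (hr : 0 < r) (ht : t < r)
    (hX : μ.map X = expMeasure r) : mgf X μ t = r / (r - t) := by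
  rw [← mgf_id_map (aemeasurable_of_map_eq_expMeasure hr hX), hX, mgf_id_expMeasure hr ht]

lemma measure_sum_le_le_of_iIndepFun_expMeasure {ι : Type*} [Fintype ι] {X : ι → Ω → ℝ}
    {r ε : ℝ} (hindep : iIndepFun X μ) (hX : ∀ i, μ.map (X i) = expMeasure r) (hr : 0 < r)
    (hε : 0 < ε) (hεr : r * ε ≤ Fintype.card ι) :
    μ {ω | ∑ i, X i ω ≤ ε}
      ≤ ENNReal.ofReal ((Real.exp 1 * r * ε / Fintype.card ι) ^ Fintype.card ι) := by
  have := hindep.isProbabilityMeasure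
  set n := Fintype.card ι
  have hn : (0 : ℝ) < n := lt_of_lt_of_le (by positivity) hεr
  -- Chernoff's bound at the optimal parameter `t = r - n / ε`
  set t := r - n / ε
  have ht : t ≤ 0 := by
    rw [sub_nonpos, le_div_iff₀ hε]; exact hεr
  have hmgf : mgf (∑ i, X i) μ t = (r * ε / n) ^ n := by
    rw [hindep.mgf_sum₀ (fun i ↦ aemeasurable_of_map_eq_expMeasure hr (hX i)),
      Finset.prod_congr rfl fun i _ ↦ mgf_of_map_eq_expMeasure hr (by linarith) (hX i),
      Finset.prod_const, Finset.card_univ, sub_sub_cancel, div_div_eq_mul_div]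
  have hint : Integrable (fun ω ↦ Real.exp (t * (∑ i, X i) ω)) μ :=
    mgf_pos_iff.1 (hmgf ▸ by positivity)
  have hexp : Real.exp (-t * ε) ≤ Real.exp n :=
    Real.exp_le_exp.2 (by rw [neg_mul, sub_mul, div_mul_cancel₀ _ hε.ne']; nlinarith)
  rw [← ofReal_measureReal]
  refine ENNReal.ofReal_le_ofReal ?_
  calc μ.real {ω | ∑ i, X i ω ≤ ε} = μ.real {ω | (∑ i, X i) ω ≤ ε} := by
        simp [Finset.sum_apply]
    _ ≤ Real.exp (-t * ε) * mgf (∑ i, X i) μ t := measure_le_le_exp_mul_mgf ε ht hint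
    _ ≤ Real.exp n * (r * ε / n) ^ n := by rw [hmgf]; gcongr
    _ = (Real.exp 1 * r * ε / n) ^ n := by
        rw [← Real.exp_one_pow, ← mul_pow]; ring

end ExponentialSums

section PlanarAssignment

variable {d n : ℕ} (z : Fin d)

def planarCell (π : Fin d → Equiv.Perm (Fin n)) (i : Fin n) : Fin d → Fin n :=
  fun t ↦ if t = z then i else π t i

lemma planarCell_injective (π : Fin d → Equiv.Perm (Fin n)) :
    Function.Injective (planarCell z π) := fun i j h ↦ by
  simpa [planarCell] using congrFun h z

lemma planarCell_congr {π π' : Fin d → Equiv.Perm (Fin n)}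
    (h : ∀ t, t ≠ z → π t = π' t) : planarCell z π = planarCell z π' := by
  ext i t : 2
  by_cases ht : t = z
  · simp [planarCell, ht]
  · simp [planarCell, ht, h t ht]

variable {Ω : Type*} [MeasurableSpace Ω] {μ : Measure Ω} {C : (Fin d → Fin n) → Ω → ℝ}

lemma measure_sum_planarCell_le_le (hindep : iIndepFun C μ)
    (hC : ∀ v, μ.map (C v) = expMeasure 1) (π : Fin d → Equiv.Perm (Fin n)) {ε : ℝ}
    (hε : 0 < ε) (hεn : ε ≤ n) :
    μ {ω | ∑ i, C (planarCell z π i) ω ≤ ε}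
      ≤ ENNReal.ofReal ((Real.exp 1 * ε / n) ^ n) := by
  simpa using measure_sum_le_le_of_iIndepFun_expMeasure (X := fun i ↦ C (planarCell z π i))
    (hindep.precomp (planarCell_injective z π)) (fun i ↦ hC _) one_pos hε (by simpa using hεn)

lemma measure_exists_sum_planarCell_le_le (hindep : iIndepFun C μ)
    (hC : ∀ v, μ.map (C v) = expMeasure 1) {ε : ℝ} (hε : 0 < ε) (hεn : ε ≤ n) :
    μ {ω | ∃ π : Fin d → Equiv.Perm (Fin n), ∑ i, C (planarCell z π i) ω ≤ ε}
      ≤ ENNReal.ofReal ((n ! : ℝ) ^ (d - 1) * (Real.exp 1 * ε / n) ^ n) := by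
  -- the cost does not depend on `π z`, so only `(n !) ^ (d - 1)` events are involved
  let extend (ρ : {t // t ≠ z} → Equiv.Perm (Fin n)) (t : Fin d) : Equiv.Perm (Fin n) :=
    if h : t = z then 1 else ρ ⟨t, h⟩
  have hcover : {ω | ∃ π : Fin d → Equiv.Perm (Fin n), ∑ i, C (planarCell z π i) ω ≤ ε}
      ⊆ ⋃ ρ, {ω | ∑ i, C (planarCell z (extend ρ) i) ω ≤ ε} := by
    rintro ω ⟨π, hπ⟩
    refine Set.mem_iUnion.2 ⟨fun t ↦ π t, ?_⟩
    rwa [planarCell_congr z (π' := π) fun t ht ↦ by simp [extend, ht]]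
  have hcard : Fintype.card ({t // t ≠ z} → Equiv.Perm (Fin n)) = n ! ^ (d - 1) := by
    simp [Fintype.card_perm, Fintype.card_subtype_compl]
  calc _ ≤ ∑ ρ, μ {ω | ∑ i, C (planarCell z (extend ρ) i) ω ≤ ε} :=
        (measure_mono hcover).trans (measure_iUnion_fintype_le _ _)
    _ ≤ ∑ _ρ : {t // t ≠ z} → Equiv.Perm (Fin n),
          ENNReal.ofReal ((Real.exp 1 * ε / n) ^ n) :=
        Finset.sum_le_sum fun ρ _ ↦ measure_sum_planarCell_le_le z hindep hC _ hε hεn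
    _ = _ := by
        rw [Finset.sum_const, Finset.card_univ, hcard, nsmul_eq_mul,
          ENNReal.ofReal_mul (by positivity)]
        norm_cast

end PlanarAssignment

lemma tendsto_measure_of_tendsto_measure_compl {α : Type*} {l : Filter α} {Ω : α → Type*}
    [∀ a, MeasurableSpace (Ω a)] {μ : ∀ a, Measure (Ω a)}
    [∀ a, IsProbabilityMeasure (μ a)]
    {s : ∀ a, Set (Ω a)} (h : Tendsto (fun a ↦ μ a (s a)ᶜ) l (𝓝 0)) :
    Tendsto (fun a ↦ μ a (s a)) l (𝓝 1) := by
  refine tendsto_of_tendsto_of_tendsto_of_le_of_le (g := fun a ↦ 1 - μ a (s a)ᶜ) ?_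
    tendsto_const_nhds (fun a ↦ ?_) (fun a ↦ prob_le_one)
  · simpa using ENNReal.Tendsto.sub tendsto_const_nhds h (Or.inl ENNReal.one_ne_top)
  · rw [tsub_le_iff_right, ← measure_univ (μ := μ a)]
    exact measure_univ_le_add_compl _

/-- for `d ≥ 3` and iid Exp(1) entries, whp the minimum planar assignment
cost satisfies `Z_P(n,d) ≥ n^{2-d}/2`, i.e. whp every planar assignment has cost at least
`n^{2-d}/2`. -/
theorem planar_assignment_lower_bound_whp
    (d : ℕ) (hd : 3 ≤ d)
    (Ω : ℕ → Type*) (mΩ : ∀ n, MeasurableSpace (Ω n))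
    (μ : ∀ n, Measure (Ω n))
    (C : ∀ n, (Fin d → Fin n) → Ω n → ℝ)
    (hCindep : ∀ n, iIndepFun (C n) (μ n))
    (hCexp : ∀ n v, Measure.map (C n v) (μ n) = expMeasure 1) :
    Tendsto
      (fun n => μ n {ω | ∀ π : Fin d → Equiv.Perm (Fin n),
        (n : ℝ) ^ ((2 : ℤ) - d) / 2 ≤
          ∑ i : Fin n,
            C n (fun t : Fin d => if t = (⟨0, by omega⟩ : Fin d) then i else π t i) ω})
      atTop (nhds 1) := by
  have := fun n ↦ (hCindep n).isProbabilityMeasure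
  refine tendsto_measure_of_tendsto_measure_compl ?_
  have hdecay :
      Tendsto (fun n : ℕ ↦ ENNReal.ofReal (4 * (Real.exp 1 / 8) ^ n)) atTop (𝓝 0) := by
    rw [← ENNReal.ofReal_zero, ← mul_zero 4]
    refine ENNReal.tendsto_ofReal
      ((tendsto_pow_atTop_nhds_zero_of_lt_one (by positivity) ?_).const_mul 4)
    linarith [Real.exp_one_lt_d9]
  refine tendsto_of_tendsto_of_tendsto_of_le_of_le' tendsto_const_nhds hdecay
    (Eventually.of_forall fun _ ↦ zero_le) ?_
  filter_upwards [eventually_ne_atTop 0] with n hn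
  have hε : (0 : ℝ) < (n : ℝ) ^ ((2 : ℤ) - d) / 2 := by positivity
  have hεn : (n : ℝ) ^ ((2 : ℤ) - d) / 2 ≤ n := by
    have : (n : ℝ) ^ ((2 : ℤ) - d) ≤ 1 :=
      zpow_le_one_of_nonpos₀ (by exact_mod_cast Nat.one_le_iff_ne_zero.2 hn) (by omega)
    have : (1 : ℝ) ≤ n := by exact_mod_cast Nat.one_le_iff_ne_zero.2 hn
    linarith
  have hbad :=
    measure_exists_sum_planarCell_le_le (μ := μ n) ⟨0, by omega⟩ (hCindep n) (hCexp n)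
      hε hεn
  have hfac := ENNReal.ofReal_le_ofReal (factorial_pow_mul_le_geometric hn hd)
  refine le_trans (measure_mono fun ω hω ↦ ?_) (hbad.trans hfac)
  obtain ⟨π, hπ⟩ := not_forall.1 hω
  exact ⟨π, (not_le.1 hπ).le⟩
end

section
/- Fix θ ∈ (0,1). For each n, let n_1 = n − ⌈n^{1−θ}⌉, and let Y_1, …, Y_{n_1} be independent random variables where Y_i is exponential with rate (n−i+1)^2. Then P( Σ_{i=1}^{n_1} Y_i ≤ 2 n^{θ−1} ) → 1 as n → ∞. -/
/-!
Write `m = ⌈n^{1-θ}⌉`, so that the rates are `k²` for `k = m+1, …, n`, and `t = n^{θ-1} ≥ 1/m`.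
By telescoping, `E[ΣY] = Σ_{k>m} 1/k² ≤ 1/m ≤ t` and `Var[ΣY] = Σ_{k>m} 1/k⁴ ≤ 1/m³ ≤ t³`,
so Chebyshev's inequality gives `P(ΣY > 2t) ≤ P(ΣY ≥ E[ΣY] + t) ≤ t³ / t² = t → 0`.
-/

open MeasureTheory ProbabilityTheory Filter Finset Real
open scoped ENNReal Nat

namespace ProbabilityTheory

variable {r : ℝ}

lemma integral_pow_expMeasure (hr : 0 < r) (p : ℕ) :
    ∫ x, x ^ p ∂expMeasure r = p ! / r ^ p := by
  have hmeas : Measurable (exponentialPDF r) := (measurable_exponentialPDFReal r).ennreal_ofReal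
  have hdensity : (fun x => (exponentialPDF r x).toReal • x ^ p) =
      (Set.Ici 0).indicator (fun x => r * (x ^ ((p + 1 : ℝ) - 1) * exp (-(r * x)))) := by
    ext x
    by_cases hx : 0 ≤ x
    · have hpdf : 0 ≤ r * exp (-(r * x)) := by positivity
      simp only [exponentialPDF_of_nonneg hx, ENNReal.toReal_ofReal hpdf, ← rpow_natCast,
        smul_eq_mul, add_sub_cancel_right, Set.mem_Ici, hx, Set.indicator_of_mem]
      ring
    · simp [exponentialPDF_of_neg (not_le.mp hx), hx]
  change ∫ x, x ^ p ∂volume.withDensity (exponentialPDF r) = _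
  rw [integral_withDensity_eq_integral_toReal_smul hmeas
    (ae_of_all _ fun _ => ENNReal.ofReal_lt_top), hdensity, integral_indicator measurableSet_Ici,
    integral_Ici_eq_integral_Ioi, integral_const_mul,
    integral_rpow_mul_exp_neg_mul_Ioi (by positivity) hr,
    Gamma_nat_eq_factorial, ← Nat.cast_succ, Real.rpow_natCast, pow_succ]
  field_simp
  rw [← mul_pow, one_div_mul_cancel hr.ne', one_pow]

lemma integrable_pow_expMeasure (hr : 0 < r) (p : ℕ) :
    Integrable (fun x => x ^ p) (expMeasure r) :=
  Integrable.of_integral_ne_zero <| by rw [integral_pow_expMeasure hr]; positivity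

lemma memLp_id_expMeasure (hr : 0 < r) : MemLp id 2 (expMeasure r) :=
  (memLp_two_iff_integrable_sq aestronglyMeasurable_id).2 (integrable_pow_expMeasure hr 2)

lemma integral_id_expMeasure (hr : 0 < r) : ∫ x, x ∂expMeasure r = r⁻¹ := by
  simpa using integral_pow_expMeasure hr 1

lemma variance_id_expMeasure (hr : 0 < r) : Var[id; expMeasure r] = (r ^ 2)⁻¹ := by
  have := isProbabilityMeasure_expMeasure hr
  rw [variance_eq_sub (memLp_id_expMeasure hr)]
  simp only [Pi.pow_apply, id_eq, integral_pow_expMeasure hr, integral_id_expMeasure hr]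
  norm_num [Nat.factorial]
  ring

variable {Ω : Type*} {mΩ : MeasurableSpace Ω} {μ : Measure Ω}

lemma HasLaw.memLp {E : Type*} [NormedAddCommGroup E] [MeasurableSpace E] {ν : Measure E}
    {X : Ω → E} {p : ℝ≥0∞} (hX : HasLaw X ν μ) (h : MemLp id p ν) : MemLp X p μ :=
  (memLp_map_measure_iff (g := id) (hX.map_eq ▸ h.1) hX.aemeasurable).1 (hX.map_eq ▸ h)

lemma measure_sum_integral_add_le_sum_le [IsFiniteMeasure μ] {ι : Type*} {s : Finset ι}
    {X : ι → Ω → ℝ} (hX : ∀ i ∈ s, MemLp (X i) 2 μ)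
    (hindep : Set.Pairwise ↑s fun i j => X i ⟂ᵢ[μ] X j) {t : ℝ} (ht : 0 < t) :
    μ {ω | ∑ i ∈ s, μ[X i] + t ≤ ∑ i ∈ s, X i ω} ≤
      ENNReal.ofReal ((∑ i ∈ s, Var[X i; μ]) / t ^ 2) := by
  have hmean : ∫ ω, ∑ i ∈ s, X i ω ∂μ = ∑ i ∈ s, μ[X i] :=
    integral_finsetSum s fun i hi => (hX i hi).integrable one_le_two
  rw [← IndepFun.variance_sum hX hindep]
  refine le_trans (measure_mono fun ω hω => ?_)
    (meas_ge_le_variance_div_sq (memLp_finsetSum' s hX) ht)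
  simp only [Set.mem_ofPred_eq, Finset.sum_apply, hmean] at hω ⊢
  exact le_trans (by linarith) (le_abs_self _)

lemma measure_sum_inv_add_le_sum_le_of_hasLaw_expMeasure [IsFiniteMeasure μ] {ι : Type*}
    {s : Finset ι} {X : ι → Ω → ℝ} {r : ι → ℝ} (hr : ∀ i ∈ s, 0 < r i)
    (hX : ∀ i ∈ s, HasLaw (X i) (expMeasure (r i)) μ)
    (hindep : Set.Pairwise ↑s fun i j => X i ⟂ᵢ[μ] X j) {t : ℝ} (ht : 0 < t) :
    μ {ω | ∑ i ∈ s, (r i)⁻¹ + t ≤ ∑ i ∈ s, X i ω} ≤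
      ENNReal.ofReal ((∑ i ∈ s, (r i ^ 2)⁻¹) / t ^ 2) := by
  have hmean : ∀ i ∈ s, μ[X i] = (r i)⁻¹ := fun i hi =>
    ((hX i hi).integral_eq).trans (integral_id_expMeasure (hr i hi))
  have hvar : ∀ i ∈ s, Var[X i; μ] = (r i ^ 2)⁻¹ := fun i hi =>
    ((hX i hi).variance_eq).trans (variance_id_expMeasure (hr i hi))
  rw [← Finset.sum_congr rfl hmean, ← Finset.sum_congr rfl hvar]
  exact measure_sum_integral_add_le_sum_le
    (fun i hi => (hX i hi).memLp (memLp_id_expMeasure (hr i hi))) hindep ht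


end ProbabilityTheory

namespace MeasureTheory

lemma tendsto_measure_nhds_one_of_tendsto_measure_compl {ι : Type*} {l : Filter ι}
    {Ω : ι → Type*} {mΩ : ∀ i, MeasurableSpace (Ω i)} {μ : ∀ i, Measure (Ω i)}
    [∀ i, IsProbabilityMeasure (μ i)] {A : ∀ i, Set (Ω i)}
    (h : Tendsto (fun i => μ i (A i)ᶜ) l (nhds 0)) :
    Tendsto (fun i => μ i (A i)) l (nhds 1) := by
  have hlower : Tendsto (fun i => 1 - μ i (A i)ᶜ) l (nhds 1) := by
    simpa using ENNReal.Tendsto.sub tendsto_const_nhds h (.inl ENNReal.one_ne_top)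
  refine tendsto_of_tendsto_of_tendsto_of_le_of_le hlower tendsto_const_nhds
    (fun i => tsub_le_iff_right.2 ?_) (fun i => prob_le_one)
  calc 1 = μ i (A i ∪ (A i)ᶜ) := by rw [Set.union_compl_self, measure_univ]
    _ ≤ μ i (A i) + μ i (A i)ᶜ := measure_union_le _ _

end MeasureTheory

lemma sum_range_inv_sq_sub_le {n N : ℕ} (hN : N < n) :
    ∑ i ∈ range N, (((n - i : ℕ) : ℝ) ^ 2)⁻¹ ≤ ((n - N : ℕ) : ℝ)⁻¹ := by
  have hreflect : ∑ i ∈ range N, (((n - i : ℕ) : ℝ) ^ 2)⁻¹ =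
      ∑ k ∈ Ioc (n - N) n, ((k : ℝ) ^ 2)⁻¹ := by
    rw [range_eq_Ico, sum_Ico_reflect (fun k => ((k : ℝ) ^ 2)⁻¹) 0 (by omega),
      show n + 1 - N = n - N + 1 by omega, Nat.sub_zero, Ico_add_one_add_one_eq_Ioc]
  rw [hreflect]
  have hn : (0 : ℝ) ≤ (n : ℝ)⁻¹ := by positivity
  linarith [sum_Ioc_inv_sq_le_sub (α := ℝ) (by omega : n - N ≠ 0) (Nat.sub_le n N)]

lemma sum_range_inv_sq_sq_sub_le {n N : ℕ} (hN : N < n) :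
    ∑ i ∈ range N, ((((n - i : ℕ) : ℝ) ^ 2) ^ 2)⁻¹ ≤ (((n - N : ℕ) : ℝ) ^ 3)⁻¹ := by
  have hm : (0 : ℝ) < (n - N : ℕ) := by exact_mod_cast Nat.sub_pos_of_lt hN
  calc ∑ i ∈ range N, ((((n - i : ℕ) : ℝ) ^ 2) ^ 2)⁻¹
      ≤ ∑ i ∈ range N, (((n - N : ℕ) : ℝ) ^ 2)⁻¹ * (((n - i : ℕ) : ℝ) ^ 2)⁻¹ := by
        refine sum_le_sum fun i hi => ?_
        have hi : n - N ≤ n - i := by have := mem_range.1 hi; omega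
        have hk : (0 : ℝ) < (n - i : ℕ) := hm.trans_le (by exact_mod_cast hi)
        rw [← mul_inv, sq (((n - i : ℕ) : ℝ) ^ 2)]
        gcongr
    _ ≤ (((n - N : ℕ) : ℝ) ^ 2)⁻¹ * ((n - N : ℕ) : ℝ)⁻¹ := by
        rw [← mul_sum]
        gcongr
        exact sum_range_inv_sq_sub_le hN
    _ = (((n - N : ℕ) : ℝ) ^ 3)⁻¹ := by ring

section

variable {Ω : Type*} {mΩ : MeasurableSpace Ω} {μ : Measure Ω}

lemma measure_two_div_lt_sum_le [IsFiniteMeasure μ] {n N : ℕ} (hN : N < n)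
    {Y : Fin N → Ω → ℝ} (hY : ∀ i : Fin N, HasLaw (Y i) (expMeasure (((n - i : ℕ) : ℝ) ^ 2)) μ)
    (hindep : iIndepFun Y μ) :
    μ {ω | 2 / ((n - N : ℕ) : ℝ) < ∑ i, Y i ω} ≤ ENNReal.ofReal ((n - N : ℕ) : ℝ)⁻¹ := by
  set m : ℝ := ((n - N : ℕ) : ℝ)
  have hm : 0 < m := Nat.cast_pos.2 (Nat.sub_pos_of_lt hN)
  have hrate : ∀ i : Fin N, 0 < (((n - i : ℕ) : ℝ) ^ 2) := fun i => by
    have : 0 < n - (i : ℕ) := by omega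
    positivity
  have hmean : ∑ i : Fin N, (((n - i : ℕ) : ℝ) ^ 2)⁻¹ ≤ m⁻¹ := by
    rw [Fin.sum_univ_eq_sum_range (fun i => (((n - i : ℕ) : ℝ) ^ 2)⁻¹)]
    exact sum_range_inv_sq_sub_le hN
  have hvar : ∑ i : Fin N, ((((n - i : ℕ) : ℝ) ^ 2) ^ 2)⁻¹ ≤ (m ^ 3)⁻¹ := by
    rw [Fin.sum_univ_eq_sum_range (fun i => ((((n - i : ℕ) : ℝ) ^ 2) ^ 2)⁻¹)]
    exact sum_range_inv_sq_sq_sub_le hN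
  calc μ {ω | 2 / m < ∑ i, Y i ω}
      ≤ μ {ω | ∑ i : Fin N, (((n - i : ℕ) : ℝ) ^ 2)⁻¹ + m⁻¹ ≤ ∑ i, Y i ω} := by
        refine measure_mono fun ω hω => ?_
        simp only [Set.mem_ofPred_eq] at hω ⊢
        linarith [show 2 / m = m⁻¹ + m⁻¹ by ring]
    _ ≤ ENNReal.ofReal ((∑ i : Fin N, ((((n - i : ℕ) : ℝ) ^ 2) ^ 2)⁻¹) / m⁻¹ ^ 2) :=
        measure_sum_inv_add_le_sum_le_of_hasLaw_expMeasure (fun i _ => hrate i)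
          (fun i _ => hY i) (fun i _ j _ hij => hindep.indepFun hij) (by positivity)
    _ ≤ ENNReal.ofReal m⁻¹ := by
        refine ENNReal.ofReal_le_ofReal ?_
        calc (∑ i : Fin N, ((((n - i : ℕ) : ℝ) ^ 2) ^ 2)⁻¹) / m⁻¹ ^ 2
            ≤ (m ^ 3)⁻¹ / m⁻¹ ^ 2 := by gcongr
          _ = m⁻¹ := by field_simp

lemma measure_two_mul_rpow_lt_sum_le [IsFiniteMeasure μ] {θ : ℝ} (hθ : 0 ≤ θ) {n N : ℕ}
    (hn : 1 ≤ n) (hN : N = n - ⌈(n : ℝ) ^ (1 - θ)⌉₊) {Y : Fin N → Ω → ℝ}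
    (hY : ∀ i : Fin N, HasLaw (Y i) (expMeasure (((n - i : ℕ) : ℝ) ^ 2)) μ)
    (hindep : iIndepFun Y μ) :
    μ {ω | 2 * (n : ℝ) ^ (θ - 1) < ∑ i, Y i ω} ≤ ENNReal.ofReal ((n : ℝ) ^ (θ - 1)) := by
  set m := ⌈(n : ℝ) ^ (1 - θ)⌉₊
  have hn0 : (0 : ℝ) < n := by exact_mod_cast hn
  have hm_ge : (n : ℝ) ^ (1 - θ) ≤ m := Nat.le_ceil _
  have hm_pos : 0 < m := Nat.ceil_pos.2 (rpow_pos_of_pos hn0 _)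
  have hm_le : m ≤ n := Nat.ceil_le.2 <| by
    simpa using rpow_le_rpow_of_exponent_le (by exact_mod_cast hn : (1 : ℝ) ≤ n)
      (by linarith : 1 - θ ≤ 1)
  have hinv : (m : ℝ)⁻¹ ≤ (n : ℝ) ^ (θ - 1) := by
    rw [show θ - 1 = -(1 - θ) by ring, rpow_neg hn0.le]
    exact inv_anti₀ (by positivity) hm_ge
  have hcost := measure_two_div_lt_sum_le (by omega : N < n) hY hindep
  rw [show n - N = m by omega] at hcost
  calc μ {ω | 2 * (n : ℝ) ^ (θ - 1) < ∑ i, Y i ω}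
      ≤ μ {ω | 2 / (m : ℝ) < ∑ i, Y i ω} := by
        refine measure_mono fun ω hω => ?_
        simp only [Set.mem_ofPred_eq] at hω ⊢
        linarith [show 2 / (m : ℝ) = 2 * (m : ℝ)⁻¹ by ring]
    _ ≤ ENNReal.ofReal (m : ℝ)⁻¹ := hcost
    _ ≤ ENNReal.ofReal ((n : ℝ) ^ (θ - 1)) := ENNReal.ofReal_le_ofReal hinv

end

/-- Here `i : Fin (n₁ n)` stands for the index `i + 1`, whence the rate `(n - i)²`. -/
theorem greedy_phase_cost_whp
    (θ : ℝ) (hθ : 0 < θ ∧ θ < 1)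
    (n₁ : ℕ → ℕ) (hn₁ : ∀ n, n₁ n = n - ⌈(n : ℝ) ^ (1 - θ)⌉₊)
    (Ω : ℕ → Type*) (mΩ : ∀ n, MeasurableSpace (Ω n))
    (μ : ∀ n, Measure (Ω n)) (hμ : ∀ n, IsProbabilityMeasure (μ n))
    (Y : ∀ n, Fin (n₁ n) → Ω n → ℝ)
    (hYmeas : ∀ n i, Measurable (Y n i))
    (hYindep : ∀ n, iIndepFun (Y n) (μ n))
    (hYexp : ∀ n, ∀ i : Fin (n₁ n),
      Measure.map (Y n i) (μ n) = expMeasure (((n - (i : ℕ) : ℕ) : ℝ) ^ 2)) :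
    Tendsto
      (fun n => μ n {ω | (∑ i : Fin (n₁ n), Y n i ω) ≤ 2 * (n : ℝ) ^ (θ - 1)})
      atTop (nhds 1) := by
  obtain ⟨hθ0, hθ1⟩ := hθ
  have hpow : Tendsto (fun n : ℕ => (n : ℝ) ^ (θ - 1)) atTop (nhds 0) := by
    simpa [Function.comp_def, neg_sub] using
      (tendsto_rpow_neg_atTop (by linarith : 0 < 1 - θ)).comp tendsto_natCast_atTop_atTop
  refine tendsto_measure_nhds_one_of_tendsto_measure_compl <|
    tendsto_of_tendsto_of_tendsto_of_le_of_le' tendsto_const_nhds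
      (by simpa using ENNReal.tendsto_ofReal hpow) (.of_forall fun _ => zero_le) ?_
  filter_upwards [eventually_ge_atTop 1] with n hn
  simpa only [Set.compl_ofPred, not_le] using measure_two_mul_rpow_lt_sum_le hθ0.le hn (hn₁ n)
    (fun i => ⟨(hYmeas n i).aemeasurable, hYexp n i⟩) (hYindep n)
end
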